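/- arXiv:1103.2114 — 3 statements merged into one kernel-verified Lean document; each statement's English description precedes it below -/
import Mathlib

section
/- Let A be an abelian torsion p-group, μ a positive integer dividing p−1, φ an automorphism of A of order μ, and ε_μ a primitive μ-th root of unity in the ring Z_p of p-adic integers. Then A, viewed canonically as a Z_p-module (with scalar action induced by the rule that z·a = 0 whenever p^k a = 0 and z ∈ p^k Z_p), decomposes as a direct sum A = ⊕_{u=0}^{μ−1} A_u, where A_u = {a ∈ A : φ(a) = ε_μ^u · a}. -/
/-- Let A be an abelian torsion p-group, μ a positive integer dividing p−1,
φ an automorphism of A of order μ, and ε_μ a primitive μ-th root of unity in ℤ_p.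
Then A, viewed canonically as a ℤ_p-module, decomposes as the internal direct sum
A = ⊕_{u=0}^{μ−1} A_u, where A_u = {a ∈ A : φ(a) = ε_μ^u • a}. -/
theorem statement0 (p μ : ℕ) [Fact p.Prime] (hμ : 0 < μ) (hdvd : μ ∣ p - 1)
    (A : Type*) [AddCommGroup A] [Module ℤ_[p] A]
    (htor : ∀ a : A, ∃ k : ℕ, (p ^ k : ℕ) • a = 0)
    -- the ℤ_p-action is the canonical one: z • a = 0 whenever p^k a = 0 and z ∈ p^k ℤ_p,
    -- and it restricts to the natural ℕ-action
    (hcanon : ∀ (z : ℤ_[p]) (k : ℕ) (a : A), (p : ℤ_[p]) ^ k ∣ z → (p ^ k : ℕ) • a = 0 → z • a = 0)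
    (hnat : ∀ (n : ℕ) (a : A), ((n : ℤ_[p])) • a = n • a)
    (φ : AddAut A) (hφ : addOrderOf φ = μ)
    (ε : ℤ_[p]) (hε : IsPrimitiveRoot ε μ)
    (Au : Fin μ → AddSubgroup A)
    (hAu : ∀ (u : Fin μ) (a : A), a ∈ Au u ↔ φ a = (ε ^ (u : ℕ)) • a) :
    DirectSum.IsInternal Au := by
  classical
  obtain ⟨ν, rfl⟩ : ∃ ν, μ = ν + 1 := ⟨μ - 1, (Nat.succ_pred_eq_of_pos hμ).symm⟩
  have hp : p.Prime := Fact.out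
  have hεpow : ε ^ (ν + 1) = 1 := hε.pow_eq_one
  have hmodk : ∀ i k : ℕ, ε ^ (i + (ν + 1) * k) = ε ^ i := by
    intro i k
    rw [pow_add, pow_mul, hεpow, one_pow, mul_one]
  -- (ν+1 : ℤ_[p]) is a unit
  have hμnp : ¬ p ∣ (ν + 1) := by
    intro h
    have h1 : ν + 1 ≤ p - 1 := Nat.le_of_dvd (by have := hp.two_le; omega) hdvd
    have h2 : p ≤ ν + 1 := Nat.le_of_dvd (Nat.succ_pos ν) h
    omega
  have hunit : IsUnit ((ν + 1 : ℕ) : ℤ_[p]) := by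
    rw [PadicInt.isUnit_iff]
    refine le_antisymm (PadicInt.norm_le_one _) (not_lt.mp ?_)
    have h0 : ¬ ((p : ℤ) ∣ ((ν + 1 : ℕ) : ℤ)) := by exact_mod_cast hμnp
    have h := (PadicInt.norm_int_lt_one_iff_dvd ((ν + 1 : ℕ) : ℤ)).not.mpr h0
    simpa using h
  obtain ⟨m, hm⟩ := hunit.exists_left_inv
  have hinv : ∀ a : A, m • (((ν + 1 : ℕ) : ℤ_[p])) • a = a := by
    intro a; rw [smul_smul, hm, one_smul]
  -- φ commutes with the ℤ_[p]-action
  have hcomm : ∀ (z : ℤ_[p]) (a : A), φ (z • a) = z • φ a := by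
    intro z a
    obtain ⟨k, hk⟩ := htor a
    have hdvd' : (p : ℤ_[p]) ^ k ∣ z - (z.appr k : ℤ_[p]) :=
      Ideal.mem_span_singleton.mp (PadicInt.appr_spec k z)
    have key : ∀ b : A, (p ^ k : ℕ) • b = 0 → z • b = ((z.appr k : ℕ) : ℤ_[p]) • b := by
      intro b hb
      have h0 : (z - (z.appr k : ℤ_[p])) • b = 0 := hcanon _ k b hdvd' hb
      calc z • b = (z - (z.appr k : ℤ_[p])) • b + ((z.appr k : ℕ) : ℤ_[p]) • b := by
            rw [← add_smul, sub_add_cancel]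
        _ = ((z.appr k : ℕ) : ℤ_[p]) • b := by rw [h0, zero_add]
    have hkφ : (p ^ k : ℕ) • φ a = 0 := by
      rw [← map_nsmul φ, hk, map_zero]
    rw [key a hk, key (φ a) hkφ, hnat, hnat, map_nsmul]
  have hcommv : ∀ (v : ℕ) (z : ℤ_[p]) (a : A), (v • φ) (z • a) = z • (v • φ) a := by
    intro v
    induction v with
    | zero => intro z a; simp
    | succ v ih =>
      intro z a
      rw [succ_nsmul, AddAut.add_apply, hcomm, ih, ← AddAut.add_apply]
  have hφpow : ∀ a : A, ((ν + 1) • φ) a = a := by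
    intro a
    rw [← hφ, addOrderOf_nsmul_eq_zero φ]
    rfl
  -- the projections
  set P : Fin (ν + 1) → A →+ A := fun w =>
    AddMonoidHom.mk' (fun a => m • ∑ v ∈ Finset.range (ν + 1), ε ^ (ν * (w : ℕ) * v) • (v • φ) a)
      (fun a b => by
        simp only [map_add, smul_add, Finset.sum_add_distrib]) with hPdef
  have hP : ∀ (w : Fin (ν + 1)) (a : A),
      P w a = m • ∑ v ∈ Finset.range (ν + 1), ε ^ (ν * (w : ℕ) * v) • (v • φ) a := by
    intro w a; rfl
  -- geometric sum
  have hgeom : ∀ j : ℕ, ¬ (ν + 1) ∣ j → (∑ v ∈ Finset.range (ν + 1), ε ^ (j * v)) = 0 := by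
    intro j hj
    have hne : ε ^ j ≠ 1 := fun h => hj ((hε.pow_eq_one_iff_dvd j).mp h)
    have h3 : (ε ^ j) ^ (ν + 1) = 1 := by
      rw [← pow_mul, mul_comm, pow_mul, hεpow, one_pow]
    have h2 : (∑ v ∈ Finset.range (ν + 1), (ε ^ j) ^ v) * (ε ^ j - 1) = 0 := by
      rw [geom_sum_mul, h3, sub_self]
    rcases mul_eq_zero.mp h2 with h | h
    · calc (∑ v ∈ Finset.range (ν + 1), ε ^ (j * v))
          = ∑ v ∈ Finset.range (ν + 1), (ε ^ j) ^ v :=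
            Finset.sum_congr rfl fun v _ => by rw [pow_mul]
      _ = 0 := h
    · exact absurd h (sub_ne_zero.mpr hne)
  -- each P w a lands in Au w
  have hmem : ∀ (w : Fin (ν + 1)) (a : A), P w a ∈ Au w := by
    intro w a
    rw [hAu, hP]
    have lhs : φ (m • ∑ v ∈ Finset.range (ν + 1), ε ^ (ν * (w : ℕ) * v) • (v • φ) a)
        = m • ∑ v ∈ Finset.range (ν + 1), ε ^ (ν * (w : ℕ) * v) • ((v + 1) • φ) a := by
      rw [hcomm]
      congr 1
      rw [map_sum]
      refine Finset.sum_congr rfl fun v _ => ?_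
      rw [hcomm, succ_nsmul', AddAut.add_apply]
    rw [lhs]
    have rhs : (ε ^ (w : ℕ)) • (m • ∑ v ∈ Finset.range (ν + 1), ε ^ (ν * (w : ℕ) * v) • (v • φ) a)
        = m • ∑ v ∈ Finset.range (ν + 1), ε ^ (ν * (w : ℕ) * v + (w : ℕ)) • (v • φ) a := by
      rw [smul_comm]
      congr 1
      rw [Finset.smul_sum]
      refine Finset.sum_congr rfl fun v _ => ?_
      rw [smul_smul, ← pow_add, add_comm]
    rw [rhs]
    congr 1
    rw [Finset.sum_range_succ, Finset.sum_range_succ']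
    congr 1
    · refine Finset.sum_congr rfl fun v _ => ?_
      congr 1
      have he : ν * (w : ℕ) * (v + 1) + (w : ℕ) = ν * (w : ℕ) * v + (ν + 1) * (w : ℕ) := by ring
      rw [he]
      exact (hmodk _ _).symm
    · rw [hφpow]
      have he : (w : ℕ) + (ν + 1) * (ν * (w : ℕ)) = ν * (w : ℕ) * ν + (ν + 1) * (w : ℕ) := by ring
      have h1 : ε ^ ((w : ℕ)) = ε ^ (ν * (w : ℕ) * ν) := by
        rw [← hmodk (w : ℕ) (ν * (w : ℕ)), he, hmodk]
      rw [← h1]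
      simp
    -- the sum of all projections is the identity
  have hsumall : ∀ a : A, (∑ u : Fin (ν + 1), P u a) = a := by
    intro a
    have h1 : (∑ u : Fin (ν + 1), P u a)
        = m • ∑ u : Fin (ν + 1), ∑ v ∈ Finset.range (ν + 1), ε ^ (ν * (u : ℕ) * v) • (v • φ) a := by
      rw [Finset.smul_sum]
      exact Finset.sum_congr rfl fun u _ => hP u a
    rw [h1, Finset.sum_comm]
    have h2 : ∀ v ∈ Finset.range (ν + 1),
        (∑ u : Fin (ν + 1), ε ^ (ν * (u : ℕ) * v) • (v • φ) a)
          = if v = 0 then (((ν + 1 : ℕ) : ℤ_[p])) • a else 0 := by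
      intro v hv
      by_cases h0 : v = 0
      · subst h0
        rw [if_pos rfl]
        have h7 : ∀ u : Fin (ν + 1), ε ^ (ν * (u : ℕ) * 0) • (0 • φ) a = a := by
          intro u; simp
        rw [Finset.sum_congr rfl (fun u _ => h7 u), Finset.sum_const, Finset.card_univ,
          Fintype.card_fin]
        exact (hnat _ _).symm
      · rw [if_neg h0, ← Finset.sum_smul]
        have hnd : ¬ (ν + 1) ∣ ν * v := by
          intro h
          have hd2 : (ν + 1) ∣ (ν + 1) * v - ν * v := Nat.dvd_sub (Dvd.intro v rfl) h
          have he2 : (ν + 1) * v - ν * v = v := by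
            rw [Nat.succ_mul, Nat.add_sub_cancel_left]
          rw [he2] at hd2
          have h3 := Nat.le_of_dvd (Nat.pos_of_ne_zero h0) hd2
          have h4 := Finset.mem_range.mp hv
          omega
        have h5 : (∑ u : Fin (ν + 1), ε ^ (ν * (u : ℕ) * v)) = 0 := by
          rw [Fin.sum_univ_eq_sum_range (fun u => ε ^ (ν * u * v))]
          rw [← hgeom (ν * v) hnd]
          exact Finset.sum_congr rfl fun u _ => by ring_nf
        rw [h5, zero_smul]
    rw [Finset.sum_congr rfl h2]
    rw [Finset.sum_ite_eq' (Finset.range (ν + 1)) 0 (fun _ => (((ν + 1 : ℕ) : ℤ_[p])) • a)]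
    rw [if_pos (Finset.mem_range.mpr (Nat.succ_pos ν))]
    exact hinv a
  -- projections act as Kronecker delta on the eigenspaces
  have hproj : ∀ (u w : Fin (ν + 1)) (a : A), a ∈ Au u →
      P w a = if u = w then a else 0 := by
    intro u w a ha
    rw [hAu] at ha
    have heig : ∀ v : ℕ, (v • φ) a = ε ^ ((u : ℕ) * v) • a := by
      intro v
      induction v with
      | zero => simp
      | succ v ih =>
        rw [succ_nsmul, AddAut.add_apply, ha, hcommv, ih, smul_smul, ← pow_add]
        congr 1
        ring
    have h1 : P w a = m • (∑ v ∈ Finset.range (ν + 1), ε ^ ((ν * (w : ℕ) + (u : ℕ)) * v)) • a := by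
      rw [hP]
      congr 1
      rw [Finset.sum_smul]
      refine Finset.sum_congr rfl fun v _ => ?_
      rw [heig, smul_smul, ← pow_add]
      congr 2
      ring
    by_cases huw : u = w
    · subst huw
      rw [if_pos rfl, h1]
      have h6 : ∀ v ∈ Finset.range (ν + 1), ε ^ ((ν * (u : ℕ) + (u : ℕ)) * v) = (1 : ℤ_[p]) := by
        intro v _
        have he : (ν * (u : ℕ) + (u : ℕ)) * v = 0 + (ν + 1) * ((u : ℕ) * v) := by ring
        rw [he, hmodk, pow_zero]
      rw [Finset.sum_congr rfl h6, Finset.sum_const, Finset.card_range, nsmul_eq_mul, mul_one]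
      exact hinv a
    · rw [if_neg huw, h1, hgeom _ ?_, zero_smul, smul_zero]
      intro h
      obtain ⟨t, ht⟩ := h
      have he : (ν + 1) * (w : ℕ) + (u : ℕ) = (ν + 1) * t + (w : ℕ) := by
        calc (ν + 1) * (w : ℕ) + (u : ℕ) = (ν * (w : ℕ) + (u : ℕ)) + (w : ℕ) := by ring
          _ = (ν + 1) * t + (w : ℕ) := by rw [ht]
      have h2 := congrArg (· % (ν + 1)) he
      simp only [Nat.mul_add_mod] at h2
      rw [Nat.mod_eq_of_lt u.isLt, Nat.mod_eq_of_lt w.isLt] at h2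
      exact huw (Fin.ext h2)
  constructor
  · rw [injective_iff_map_eq_zero]
    intro x hx
    have hxs : (∑ u : Fin (ν + 1), ((x u : A))) = 0 := by
      calc (∑ u : Fin (ν + 1), ((x u : A)))
          = DirectSum.coeAddMonoidHom Au x := by
            conv_rhs => rw [← DirectSum.sum_univ_of x]
            rw [map_sum]
            exact Finset.sum_congr rfl fun u _ =>
              (DirectSum.coeAddMonoidHom_of Au u (x u)).symm
        _ = 0 := hx
    refine DFinsupp.ext fun w => ?_
    have hxw : (x w : A) = 0 := by
      have h3 : P w (∑ u : Fin (ν + 1), ((x u : A))) = 0 := by rw [hxs, map_zero]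
      rw [map_sum] at h3
      have h4 : ∀ u ∈ (Finset.univ : Finset (Fin (ν + 1))),
          P w ((x u : A)) = if u = w then ((x u : A)) else 0 :=
        fun u _ => hproj u w _ (x u).2
      rw [Finset.sum_congr rfl h4, Finset.sum_ite_eq' Finset.univ w (fun u => ((x u : A))),
        if_pos (Finset.mem_univ w)] at h3
      exact h3
    exact Subtype.ext (by simpa using hxw)
  · intro a
    refine ⟨∑ u : Fin (ν + 1), DirectSum.of (fun u => Au u) u ⟨P u a, hmem u a⟩, ?_⟩
    rw [map_sum]
    calc (∑ u : Fin (ν + 1), DirectSum.coeAddMonoidHom Au (DirectSum.of (fun u => Au u) u ⟨P u a, hmem u a⟩))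
        = ∑ u : Fin (ν + 1), P u a :=
          Finset.sum_congr rfl fun u _ => DirectSum.coeAddMonoidHom_of Au u _
      _ = a := hsumall a
end

section
/- Let (K, v) be a valued field and H a proper isolated (convex) subgroup of the value group v(K). Let v_H denote the induced valuation of K with value group v(K)/H, and let v̂_H denote the valuation induced by v on the residue field K_H of (K, v_H), with value group H. If Ω/K is a normal field extension such that v_H extends uniquely (up to equivalence) to every intermediate field of Ω/K, and v̂_H extends uniquely (up to equivalence) to every intermediate field of the corresponding residue extension Ω_H/K_H, then v itself extends uniquely (up to equivalence) to every intermediate field of Ω/K. -/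
set_option maxHeartbeats 1000000

section Statement2Aux
open IsLocalRing
variable {K L : Type*} [Field K] [Field L]

theorem vsIsUnit_iff (A : ValuationSubring K) (a : A) :
    IsUnit a ↔ (a : K) ≠ 0 ∧ (a : K)⁻¹ ∈ A := by
  constructor
  · rintro ⟨u, rfl⟩
    have h1 : ((u : A) : K) * (((u⁻¹ : Aˣ) : A) : K) = 1 := by
      exact_mod_cast congrArg (fun x : A => (x : K)) u.mul_inv
    refine ⟨left_ne_zero_of_mul_eq_one h1, ?_⟩
    rw [inv_eq_of_mul_eq_one_right h1]
    exact SetLike.coe_mem _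
  · rintro ⟨h0, hinv⟩
    refine IsUnit.of_mul_eq_one (a := a) ⟨(a : K)⁻¹, hinv⟩ ?_
    ext
    exact mul_inv_cancel₀ h0

theorem coe_mem_of_le_of_maximal {O' C : ValuationSubring L} (h : O' ≤ C) {x : C}
    (hx : x ∈ maximalIdeal C) : (x : L) ∈ O' := by
  rcases O'.mem_or_inv_mem (x : L) with h1 | h1
  · exact h1
  · by_cases h0 : (x : L) = 0
    · rw [h0]; exact O'.zero_mem
    · exact absurd ((vsIsUnit_iff C x).2 ⟨h0, h h1⟩)
        (mem_nonunits_iff.1 ((IsLocalRing.mem_maximalIdeal x).1 hx))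

theorem residue_coe_inv (C : ValuationSubring L) (x : C) (hx : (x : L) ≠ 0)
    (hinv : (x : L)⁻¹ ∈ C) :
    residue C ⟨(x : L)⁻¹, hinv⟩ = (residue C x)⁻¹ := by
  have h1 : x * ⟨(x : L)⁻¹, hinv⟩ = 1 := by ext; exact mul_inv_cancel₀ hx
  have h2 : residue C x * residue C ⟨(x : L)⁻¹, hinv⟩ = 1 := by
    rw [← map_mul, h1, map_one]
  exact (inv_eq_of_mul_eq_one_right h2).symm

theorem residue_eq_zero_iff' (C : ValuationSubring L) (x : C) :
    residue C x = 0 ↔ x ∈ maximalIdeal C :=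
  Ideal.Quotient.eq_zero_iff_mem

/-- Pullback of a valuation subring of the residue field. -/
def pullVS (C : ValuationSubring L) (T : ValuationSubring (ResidueField C)) :
    ValuationSubring L where
  carrier := {x : L | ∃ h : x ∈ C, residue C ⟨x, h⟩ ∈ T}
  zero_mem' := ⟨C.zero_mem, by
    have : (⟨(0 : L), C.zero_mem⟩ : C) = 0 := rfl
    rw [this, map_zero]; exact T.zero_mem⟩
  one_mem' := ⟨C.one_mem, by
    have : (⟨(1 : L), C.one_mem⟩ : C) = 1 := rfl
    rw [this, map_one]; exact T.one_mem⟩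
  add_mem' := by
    rintro a b ⟨ha, hra⟩ ⟨hb, hrb⟩
    refine ⟨C.add_mem _ _ ha hb, ?_⟩
    have : (⟨a + b, C.add_mem _ _ ha hb⟩ : C) = ⟨a, ha⟩ + ⟨b, hb⟩ := rfl
    rw [this, map_add]
    exact T.add_mem _ _ hra hrb
  mul_mem' := by
    rintro a b ⟨ha, hra⟩ ⟨hb, hrb⟩
    refine ⟨C.mul_mem _ _ ha hb, ?_⟩
    have : (⟨a * b, C.mul_mem _ _ ha hb⟩ : C) = ⟨a, ha⟩ * ⟨b, hb⟩ := rfl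
    rw [this, map_mul]
    exact T.mul_mem _ _ hra hrb
  neg_mem' := by
    rintro a ⟨ha, hra⟩
    refine ⟨C.neg_mem _ ha, ?_⟩
    have : (⟨-a, C.neg_mem _ ha⟩ : C) = -⟨a, ha⟩ := rfl
    rw [this, map_neg]
    exact T.neg_mem _ hra
  mem_or_inv_mem' := by
    intro x
    by_cases hx : x ∈ C
    · rcases T.mem_or_inv_mem (residue C ⟨x, hx⟩) with h | h
      · exact Or.inl ⟨hx, h⟩
      · by_cases h0 : residue C ⟨x, hx⟩ = 0
        · exact Or.inl ⟨hx, h0 ▸ T.zero_mem⟩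
        · have hu : IsUnit (⟨x, hx⟩ : C) := by
            by_contra hnu
            exact h0 ((residue_eq_zero_iff' C _).2
              ((IsLocalRing.mem_maximalIdeal _).2 (mem_nonunits_iff.2 hnu)))
          obtain ⟨hne, hinv⟩ := (vsIsUnit_iff C ⟨x, hx⟩).1 hu
          refine Or.inr ⟨hinv, ?_⟩
          rw [show (⟨x⁻¹, hinv⟩ : C) = ⟨((⟨x, hx⟩ : C) : L)⁻¹, hinv⟩ from rfl,
            residue_coe_inv C ⟨x, hx⟩ hne hinv]
          exact h
    · have hx' : x⁻¹ ∈ C := (C.mem_or_inv_mem x).resolve_left hx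
      have h0 : x ≠ 0 := fun h => hx (h ▸ C.zero_mem)
      have hm : (⟨x⁻¹, hx'⟩ : C) ∈ maximalIdeal C := by
        rw [IsLocalRing.mem_maximalIdeal, mem_nonunits_iff]
        intro hu
        obtain ⟨-, h2⟩ := (vsIsUnit_iff C ⟨x⁻¹, hx'⟩).1 hu
        rw [show ((⟨x⁻¹, hx'⟩ : C) : L) = x⁻¹ from rfl, inv_inv] at h2
        exact hx h2
      exact Or.inr ⟨hx', (residue_eq_zero_iff' C _).2 hm ▸ T.zero_mem⟩

theorem mem_pullVS {C : ValuationSubring L} {T : ValuationSubring (ResidueField C)} {x : L} :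
    x ∈ pullVS C T ↔ ∃ h : x ∈ C, residue C ⟨x, h⟩ ∈ T := Iff.rfl

/-- The map from a smaller valuation subring into the residue field of a bigger one. -/
noncomputable def pushHom (O' C : ValuationSubring L) (h : O' ≤ C) : O' →+* ResidueField C :=
  (residue C).comp (Subring.inclusion h)

theorem pushHom_apply (O' C : ValuationSubring L) (h : O' ≤ C) (x : O') :
    pushHom O' C h x = residue C ⟨(x : L), h x.2⟩ := rfl

/-- Image of a valuation subring in the residue field of a coarsening. -/
noncomputable def pushVS (O' C : ValuationSubring L) (h : O' ≤ C) : ValuationSubring (ResidueField C) :=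
  { (pushHom O' C h).range with
    mem_or_inv_mem' := by
      intro ξ
      by_cases h0 : ξ = 0
      · exact Or.inl (h0 ▸ (pushHom O' C h).range.zero_mem)
      · obtain ⟨c, hc⟩ : ∃ c : C, residue C c = ξ := Ideal.Quotient.mk_surjective ξ
        have hcm : c ∉ maximalIdeal C := fun hm => h0 (hc ▸ (residue_eq_zero_iff' C c).2 hm)
        have hcu : IsUnit c := by
          by_contra hnu
          exact hcm ((IsLocalRing.mem_maximalIdeal _).2 (mem_nonunits_iff.2 hnu))
        obtain ⟨hne, hinv⟩ := (vsIsUnit_iff C c).1 hcu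
        rcases O'.mem_or_inv_mem (c : L) with hm | hm
        · left
          refine ⟨⟨(c : L), hm⟩, ?_⟩
          rw [pushHom_apply]
          rw [show (⟨((⟨(c : L), hm⟩ : O') : L), _⟩ : C) = c from Subtype.ext rfl]
          exact hc
        · right
          refine ⟨⟨(c : L)⁻¹, hm⟩, ?_⟩
          rw [pushHom_apply]
          rw [show (⟨((⟨(c : L)⁻¹, hm⟩ : O') : L), _⟩ : C) = ⟨(c : L)⁻¹, hinv⟩ from rfl,
            residue_coe_inv C c hne hinv, hc] }

theorem mem_pushVS {O' C : ValuationSubring L} {h : O' ≤ C} {ξ : ResidueField C} :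
    ξ ∈ pushVS O' C h ↔ ∃ a : O', residue C ⟨(a : L), h a.2⟩ = ξ := by
  exact RingHom.mem_range

theorem mem_pull_push {O' C : ValuationSubring L} (h : O' ≤ C) (x : L) :
    x ∈ pullVS C (pushVS O' C h) ↔ x ∈ O' := by
  constructor
  · rintro ⟨hxC, hp⟩
    obtain ⟨a, ha⟩ := mem_pushVS.1 hp
    have hres : residue C ((⟨x, hxC⟩ : C) - ⟨(a : L), h a.2⟩) = 0 := by
      rw [map_sub, ha, sub_self]
    have hm : ((⟨x, hxC⟩ : C) - ⟨(a : L), h a.2⟩) ∈ maximalIdeal C :=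
      (residue_eq_zero_iff' C _).1 hres
    have hxa : x - (a : L) ∈ O' := coe_mem_of_le_of_maximal h hm
    have := O'.add_mem _ _ hxa a.2
    simpa using this
  · intro hx
    exact ⟨h hx, mem_pushVS.2 ⟨⟨x, hx⟩, rfl⟩⟩

theorem exists_coarsen (f : K →+* L) {Ov OvH : ValuationSubring K} (hle : Ov ≤ OvH)
    (O' : ValuationSubring L) (h : O'.comap f = Ov) :
    ∃ C : ValuationSubring L, O' ≤ C ∧ C.comap f = OvH := by
  have hf : ∀ y : K, y ∈ Ov → f y ∈ O' := fun y hy => by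
    rw [← h] at hy; exact hy
  refine ⟨{ carrier := {x : L | ∃ y : K, y ∈ Ov ∧ y ≠ 0 ∧ y⁻¹ ∈ OvH ∧ x * f y ∈ O'}
            zero_mem' := ⟨1, Ov.one_mem, one_ne_zero, by simpa using OvH.one_mem,
              by simpa using O'.zero_mem⟩
            one_mem' := ⟨1, Ov.one_mem, one_ne_zero, by simpa using OvH.one_mem,
              by simpa using O'.one_mem⟩
            add_mem' := ?_
            neg_mem' := ?_
            mul_mem' := ?_
            mem_or_inv_mem' := ?_ }, ?_, ?_⟩
  · rintro a b ⟨y1, hy1, hy10, hy1i, hy1m⟩ ⟨y2, hy2, hy20, hy2i, hy2m⟩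
    refine ⟨y1 * y2, Ov.mul_mem _ _ hy1 hy2, mul_ne_zero hy10 hy20,
      by rw [mul_inv]; exact OvH.mul_mem _ _ hy1i hy2i, ?_⟩
    have heq : (a * b) * f (y1 * y2) = (a * f y1) * (b * f y2) := by
      rw [map_mul]; ring
    rw [heq]
    exact O'.mul_mem _ _ hy1m hy2m
  · rintro a b ⟨y1, hy1, hy10, hy1i, hy1m⟩ ⟨y2, hy2, hy20, hy2i, hy2m⟩
    refine ⟨y1 * y2, Ov.mul_mem _ _ hy1 hy2, mul_ne_zero hy10 hy20,
      by rw [mul_inv]; exact OvH.mul_mem _ _ hy1i hy2i, ?_⟩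
    have heq : (a + b) * f (y1 * y2) = (a * f y1) * f y2 + (b * f y2) * f y1 := by
      rw [map_mul]; ring
    rw [heq]
    exact O'.add_mem _ _ (O'.mul_mem _ _ hy1m (hf y2 hy2)) (O'.mul_mem _ _ hy2m (hf y1 hy1))
  · rintro a ⟨y, hy, hy0, hyi, hym⟩
    exact ⟨y, hy, hy0, hyi, by rw [neg_mul]; exact O'.neg_mem _ hym⟩
  · intro x
    refine (O'.mem_or_inv_mem x).imp (fun hx => ?_) (fun hx => ?_) <;>
      exact ⟨1, Ov.one_mem, one_ne_zero, by simpa using OvH.one_mem, by simpa using hx⟩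
  · intro x hx
    exact ⟨1, Ov.one_mem, one_ne_zero, by simpa using OvH.one_mem, by simpa using hx⟩
  · apply ValuationSubring.ext
    intro x
    constructor
    · rintro ⟨y, hy, hy0, hyi, hym⟩
      have hxy : x * y ∈ Ov := by
        rw [← h]
        show f (x * y) ∈ O'
        rw [map_mul]; exact hym
      have : x = (x * y) * y⁻¹ := by field_simp
      rw [this]
      exact OvH.mul_mem _ _ (hle hxy) hyi
    · intro hx
      rcases Ov.mem_or_inv_mem x with h1 | h1
      · exact ⟨1, Ov.one_mem, one_ne_zero, by simpa using OvH.one_mem,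
          by simpa using hf x h1⟩
      · by_cases hx0 : x = 0
        · subst hx0
          exact ⟨1, Ov.one_mem, one_ne_zero, by simpa using OvH.one_mem,
            by simpa using O'.zero_mem⟩
        · exact ⟨x⁻¹, h1, inv_ne_zero hx0, by simpa [inv_inv] using hx,
            by rw [← map_mul, mul_inv_cancel₀ hx0, map_one]; exact O'.one_mem⟩

end Statement2Aux

/-- Intermediate field from the range of an injective field embedding compatible with
the algebra maps. -/
def fieldRangeIF {k KH ΩH : Type*} [Field k] [Field KH] [Field ΩH] [Algebra KH ΩH]
    (ι : k →+* ΩH) (hι : ∀ α : KH, ∃ x : k, ι x = algebraMap KH ΩH α) :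
    IntermediateField KH ΩH :=
  { ι.fieldRange with
    algebraMap_mem' := fun α => RingHom.mem_fieldRange.2 (hι α) }

/-- The corestriction iso onto `fieldRangeIF`. -/
noncomputable def fieldRangeEquiv {k KH ΩH : Type*} [Field k] [Field KH] [Field ΩH]
    [Algebra KH ΩH] (ι : k →+* ΩH) (hι : ∀ α : KH, ∃ x : k, ι x = algebraMap KH ΩH α) :
    k ≃+* (fieldRangeIF ι hι) :=
  RingEquiv.ofBijective
    ({ toFun := fun x => ⟨ι x, RingHom.mem_fieldRange.2 ⟨x, rfl⟩⟩
       map_one' := Subtype.ext (map_one ι)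
       map_mul' := fun a b => Subtype.ext (map_mul ι a b)
       map_zero' := Subtype.ext (map_zero ι)
       map_add' := fun a b => Subtype.ext (map_add ι a b) } : k →+* (fieldRangeIF ι hι))
    ⟨fun a b hab => ι.injective (congrArg Subtype.val hab),
     fun y => by
      obtain ⟨x, hx⟩ := RingHom.mem_fieldRange.1 y.2
      exact ⟨x, Subtype.ext hx⟩⟩

theorem fieldRangeEquiv_coe {k KH ΩH : Type*} [Field k] [Field KH] [Field ΩH]
    [Algebra KH ΩH] (ι : k →+* ΩH) (hι : ∀ α : KH, ∃ x : k, ι x = algebraMap KH ΩH α)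
    (x : k) : (fieldRangeEquiv ι hι x : ΩH) = ι x := rfl

/-- A valuation (given by its valuation subring `O`) extends uniquely, up to
equivalence, to every intermediate field of `Ω/K`. This is the Ω-Henselian property. -/
def UniquelyExtends {K : Type*} [Field K] (Ω : Type*) [Field Ω] [Algebra K Ω]
    (O : ValuationSubring K) : Prop :=
  ∀ L : IntermediateField K Ω,
    ∃! O' : ValuationSubring L, O'.comap (algebraMap K L) = O

open IsLocalRing in
/-- Let (K, v) be a valued field and H a proper isolated (convex) subgroup
of the value group; H corresponds to a coarsening v_H of v, i.e. a valuation subring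
O_{v_H} with O_v ⊆ O_{v_H} ⊊ K, and v̂_H is the induced valuation on the residue field
K_H of v_H, whose valuation subring Ohat is the image of O_v. If Ω/K is normal, v_H
extends uniquely to every intermediate field of Ω/K, and v̂_H extends uniquely to every
intermediate field of the residue extension Ω_H/K_H (where Ω_H is the residue field
of the extension O_ΩH of O_{v_H} to Ω), then v extends uniquely to every intermediate
field of Ω/K. -/
theorem statement2 (K : Type*) [Field K] (Ov OvH : ValuationSubring K)
    (hle : Ov ≤ OvH) (hproper : OvH ≠ ⊤)
    (Ω : Type*) [Field Ω] [Algebra K Ω] [Normal K Ω]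
    (OΩH : ValuationSubring Ω) (hΩ : OΩH.comap (algebraMap K Ω) = OvH)
    (Ohat : ValuationSubring (IsLocalRing.ResidueField OvH))
    (hhat : ∀ x : OvH, IsLocalRing.residue OvH x ∈ Ohat ↔ (x : K) ∈ Ov)
    [Algebra (IsLocalRing.ResidueField OvH) (IsLocalRing.ResidueField OΩH)]
    (hcompat : ∀ (x : OvH) (y : OΩH), (y : Ω) = algebraMap K Ω (x : K) →
      algebraMap (IsLocalRing.ResidueField OvH) (IsLocalRing.ResidueField OΩH)
          (IsLocalRing.residue OvH x) = IsLocalRing.residue OΩH y)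
    (h1 : UniquelyExtends Ω OvH)
    (h2 : UniquelyExtends (IsLocalRing.ResidueField OΩH) Ohat) :
    UniquelyExtends Ω Ov := by
  intro L
  have htower : (algebraMap ↥L Ω).comp (algebraMap K ↥L) = algebraMap K Ω := by
    ext x; exact (IsScalarTower.algebraMap_apply K ↥L Ω x).symm
  set O'H : ValuationSubring ↥L := OΩH.comap (algebraMap ↥L Ω) with hO'Hdef
  have hO'H : O'H.comap (algebraMap K ↥L) = OvH := by
    rw [hO'Hdef, ValuationSubring.comap_comap, htower, hΩ]
  -- the element-level membership
  have haL : ∀ a : K, a ∈ OvH → algebraMap K ↥L a ∈ O'H := by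
    intro a ha
    rw [← hO'H] at ha
    exact ha
  -- the local hom between the valuation rings
  set g : ↥O'H →+* ↥OΩH :=
    { toFun := fun x => ⟨algebraMap ↥L Ω (x : ↥L), x.2⟩
      map_one' := Subtype.ext (by simp)
      map_mul' := fun a b => Subtype.ext (by push_cast; simp)
      map_zero' := Subtype.ext (by simp)
      map_add' := fun a b => Subtype.ext (by push_cast; simp) } with hgdef
  haveI : IsLocalHom g := by
    constructor
    intro a ha
    rw [vsIsUnit_iff] at ha ⊢
    obtain ⟨h0, hinv⟩ := ha
    constructor
    · intro h
      apply h0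
      show algebraMap ↥L Ω (a : ↥L) = 0
      rw [h, map_zero]
    · show algebraMap ↥L Ω ((a : ↥L)⁻¹) ∈ OΩH
      rw [map_inv₀]
      exact hinv
  set ι : ResidueField ↥O'H →+* ResidueField ↥OΩH := ResidueField.map g with hιdef
  -- key commuting property
  have hcomm : ∀ a : OvH,
      ι (residue ↥O'H ⟨algebraMap K ↥L (a : K), haL _ a.2⟩)
        = algebraMap (ResidueField OvH) (ResidueField OΩH) (residue OvH a) := by
    intro a
    rw [hιdef, ResidueField.map_residue]
    exact (hcompat a (g ⟨algebraMap K ↥L (a : K), haL _ a.2⟩)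
      (IsScalarTower.algebraMap_apply K ↥L Ω (a : K)).symm).symm
  have hι : ∀ α : ResidueField OvH, ∃ x, ι x = algebraMap (ResidueField OvH)
      (ResidueField OΩH) α := by
    intro α
    obtain ⟨a, ha⟩ : ∃ a : OvH, residue OvH a = α := Ideal.Quotient.mk_surjective α
    exact ⟨residue ↥O'H ⟨algebraMap K ↥L (a : K), haL _ a.2⟩, ha ▸ hcomm a⟩
  set F : IntermediateField (ResidueField OvH) (ResidueField OΩH) := fieldRangeIF ι hι
    with hFdef
  set e := fieldRangeEquiv ι hι with hedef
  -- relation between e and the algebra map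
  have healg : ∀ a : OvH,
      e (residue ↥O'H ⟨algebraMap K ↥L (a : K), haL _ a.2⟩)
        = algebraMap (ResidueField OvH) F (residue OvH a) := by
    intro a
    apply Subtype.ext
    rw [show ((algebraMap (ResidueField OvH) F (residue OvH a)) : ResidueField OΩH)
      = algebraMap (ResidueField OvH) (ResidueField OΩH) (residue OvH a) from rfl]
    rw [hedef, fieldRangeEquiv_coe]
    exact hcomm a
  obtain ⟨T0, hT0, hTuniq⟩ := h2 F
  set Or0 : ValuationSubring (ResidueField ↥O'H) := T0.comap (e : ResidueField ↥O'H →+* F)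
    with hOr0def
  have hOr0mem : ∀ ξ, ξ ∈ Or0 ↔ e ξ ∈ T0 := fun ξ => Iff.rfl
  -- the membership chain
  have hchain : ∀ (a : K) (ha : a ∈ OvH),
      (residue ↥O'H ⟨algebraMap K ↥L a, haL a ha⟩ ∈ Or0 ↔ a ∈ Ov) := by
    intro a ha
    rw [hOr0mem, healg ⟨a, ha⟩]
    have : algebraMap (ResidueField OvH) F (residue OvH ⟨a, ha⟩) ∈ T0
        ↔ residue OvH ⟨a, ha⟩ ∈ T0.comap (algebraMap (ResidueField OvH) F) := Iff.rfl
    rw [this, hT0, hhat]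
  refine ⟨pullVS O'H Or0, ?_, ?_⟩
  · apply ValuationSubring.ext
    intro x
    rw [ValuationSubring.mem_comap, mem_pullVS]
    constructor
    · rintro ⟨h, hr⟩
      have hx : x ∈ OvH := by rw [← hO'H]; exact h
      exact (hchain x hx).1 hr
    · intro hx
      have hxH : x ∈ OvH := hle hx
      exact ⟨haL x hxH, (hchain x hxH).2 hx⟩
  · intro O'' hO''
    obtain ⟨C, hO''C, hCcomap⟩ := exists_coarsen (algebraMap K ↥L) hle O'' hO''
    obtain ⟨C0, hC0, hC0u⟩ := h1 L
    have hCeq : C = O'H := (hC0u C hCcomap).trans (hC0u O'H hO'H).symm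
    have hle2 : O'' ≤ O'H := hCeq ▸ hO''C
    set T'' : ValuationSubring F :=
      (pushVS O'' O'H hle2).comap (e.symm : F →+* ResidueField ↥O'H) with hT''def
    have hT''mem : ∀ ξ : F, ξ ∈ T'' ↔ e.symm ξ ∈ pushVS O'' O'H hle2 := fun ξ => Iff.rfl
    have hT'' : T''.comap (algebraMap (ResidueField OvH) F) = Ohat := by
      apply ValuationSubring.ext
      intro α
      obtain ⟨a, rfl⟩ : ∃ a : OvH, residue OvH a = α := Ideal.Quotient.mk_surjective α
      rw [ValuationSubring.mem_comap, hT''mem, ← healg a, RingEquiv.symm_apply_apply]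
      have hmem : residue ↥O'H ⟨algebraMap K ↥L (a : K), haL _ a.2⟩ ∈ pushVS O'' O'H hle2
          ↔ algebraMap K ↥L (a : K) ∈ O'' := by
        rw [← mem_pull_push hle2, mem_pullVS]
        exact ⟨fun hp => ⟨haL _ a.2, hp⟩, fun ⟨h', hp⟩ => hp⟩
      rw [hmem, hhat a]
      show algebraMap K ↥L (a : K) ∈ O'' ↔ (a : K) ∈ Ov
      rw [← hO'']
      exact Iff.rfl
    have hTeq : T'' = T0 := hTuniq T'' hT''
    have hpushOr0 : pushVS O'' O'H hle2 = Or0 := by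
      apply ValuationSubring.ext
      intro ξ
      rw [hOr0mem, ← hTeq, hT''mem, RingEquiv.symm_apply_apply]
    apply ValuationSubring.ext
    intro x
    rw [← mem_pull_push hle2, hpushOr0]
end

section
/- Let (K, v) be a valued field, H an isolated (convex) proper subgroup of v(K), and Ω/K a normal field extension. If v is Ω-Henselian (i.e., extends uniquely up to equivalence to every intermediate field of Ω/K), then the coarsened valuation v_H (with value group v(K)/H) is Ω-Henselian. -/
open Polynomial IsLocalRing

lemma pow_not_mem_aux {L : Type*} [Field L] (O : ValuationSubring L) {x : L}
    (hx : x ∉ O) {m : ℕ} (hm : 0 < m) : x ^ m ∉ O := by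
  have hx0 : x ≠ 0 := fun h => hx (h ▸ O.zero_mem)
  have hinv : x⁻¹ ∈ O := (O.mem_or_inv_mem x).resolve_left hx
  intro hmem
  apply hx
  have : x = x ^ m * (x⁻¹) ^ (m - 1) := by
    rw [inv_pow, eq_mul_inv_iff_mul_eq₀ (pow_ne_zero _ hx0), ← pow_succ']
    congr 1
    omega
  rw [this]
  exact mul_mem hmem (pow_mem hinv _)

lemma exists_pow_eq_mul_unit {K L : Type*} [Field K] [Field L] [Algebra K L]
    (O : ValuationSubring L) {x : L} (halg : IsAlgebraic K x) (hx0 : x ≠ 0) :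
    ∃ (m : ℕ) (c : K) (ε : L), 0 < m ∧ ε ∈ O ∧ ε⁻¹ ∈ O ∧
      x ^ m = algebraMap K L c * ε := by
  obtain ⟨p, hp0, hpx⟩ := halg
  set v := O.valuation with hv
  set t : ℕ → L := fun i => algebraMap K L (p.coeff i) * x ^ i with ht
  have htne : ∀ i ∈ p.support, t i ≠ 0 := by
    intro i hi
    have : p.coeff i ≠ 0 := Polynomial.mem_support_iff.mp hi
    simp only [ht]
    exact mul_ne_zero (by simpa using this) (pow_ne_zero _ hx0)
  have hsum : ∑ i ∈ p.support, t i = 0 := by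
    rw [← hpx, Polynomial.aeval_def, Polynomial.eval₂_eq_sum, Polynomial.sum_def]
  obtain ⟨j, hj, hjmax⟩ := p.support.exists_max_image (fun i => v (t i))
    (Polynomial.support_nonempty.mpr hp0)
  have hvtj : v (t j) ≠ 0 := by
    simpa [Valuation.zero_iff] using htne j hj
  -- there is another index with the same valuation
  have hexists : ∃ i ∈ p.support, i ≠ j ∧ v (t i) = v (t j) := by
    by_contra hcon
    push_neg at hcon
    have hlt : ∀ i ∈ p.support.erase j, v (t i) < v (t j) := by
      intro i hi
      obtain ⟨hij, hi'⟩ := Finset.mem_erase.mp hi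
      exact lt_of_le_of_ne (hjmax i hi') (hcon i hi' hij)
    have h1 : v (∑ i ∈ p.support.erase j, t i) < v (t j) :=
      Valuation.map_sum_lt v hvtj hlt
    have h2 : ∑ i ∈ p.support.erase j, t i = - t j := by
      have := Finset.add_sum_erase _ t hj
      rw [hsum] at this
      linear_combination this
    rw [h2, Valuation.map_neg] at h1
    exact lt_irrefl _ h1
  obtain ⟨i, hi, hij, heq⟩ := hexists
  -- order them
  obtain ⟨a, b, ha, hb, hab, hvab⟩ : ∃ a b, a ∈ p.support ∧ b ∈ p.support ∧ a < b ∧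
      v (t a) = v (t b) := by
    rcases lt_or_gt_of_ne hij with h | h
    · exact ⟨i, j, hi, hj, h, heq⟩
    · exact ⟨j, i, hj, hi, h, heq.symm⟩
  have hca : p.coeff a ≠ 0 := Polynomial.mem_support_iff.mp ha
  have hcb : p.coeff b ≠ 0 := Polynomial.mem_support_iff.mp hb
  have hta : t a ≠ 0 := htne a ha
  have htb : t b ≠ 0 := htne b hb
  refine ⟨b - a, p.coeff a / p.coeff b, t b / t a, by omega, ?_, ?_, ?_⟩
  · apply O.mem_of_valuation_le_one
    rw [map_div₀, hvab, div_self (by simpa [Valuation.zero_iff] using htb)]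
  · apply O.mem_of_valuation_le_one
    rw [inv_div, map_div₀, ← hvab, div_self (by simpa [Valuation.zero_iff] using hta)]
  · have hfa : algebraMap K L (p.coeff a) ≠ 0 := by simpa using hca
    have hfb : algebraMap K L (p.coeff b) ≠ 0 := by simpa using hcb
    have hxb : x ^ b = x ^ a * x ^ (b - a) := by rw [← pow_add]; congr 1; omega
    rw [map_div₀, div_mul_div_comm, eq_div_iff (mul_ne_zero hfb hta)]
    simp only [ht]
    rw [hxb]; ring

/-- Any extension `O'` of a coarsening `OvH` of `Ov` contains a valuation subring
extending `Ov` itself (composite valuation via the residue field). -/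
lemma exists_refinement {K L : Type*} [Field K] [Field L] [Algebra K L]
    (Ov OvH : ValuationSubring K) (hle : Ov ≤ OvH)
    (O' : ValuationSubring L) (hO' : O'.comap (algebraMap K L) = OvH) :
    ∃ W' : ValuationSubring L, W' ≤ O' ∧ W'.comap (algebraMap K L) = Ov := by
  set f := algebraMap K L with hf
  have hmemH : ∀ a : K, a ∈ OvH ↔ f a ∈ O' := by
    intro a
    rw [← hO', ValuationSubring.mem_comap]
  have hsub : ∀ a : K, a ∈ Ov → f a ∈ O' := fun a ha => (hmemH a).mp (hle ha)
  -- the map Ov → O'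
  let g0 : Ov →+* O' := RingHom.codRestrict ((f.comp Ov.subtype)) O'.toSubring
    (fun a => hsub a a.2)
  let ψ : O' →+* ResidueField O' := residue _
  let g : Ov →+* ResidueField O' := ψ.comp g0
  haveI : Nontrivial g.range :=
    ⟨⟨0, 1, fun e => zero_ne_one (congrArg Subtype.val e)⟩⟩
  haveI : IsLocalRing g.range :=
    IsLocalRing.of_surjective' g.rangeRestrict g.rangeRestrict_surjective
  obtain ⟨B, hBle⟩ := (LocalSubring.mk g.range).exists_le_valuationSubring
  obtain ⟨hBsub, hBloc⟩ := LocalSubring.le_def.mp hBle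
  -- the composite valuation ring
  let Wsub : Subring L := (B.toSubring.comap ψ).map O'.subtype
  have hWmem : ∀ y : L, y ∈ Wsub ↔ ∃ h : y ∈ O', ψ ⟨y, h⟩ ∈ B.toSubring := by
    intro y
    constructor
    · rintro ⟨z, hz, rfl⟩
      exact ⟨z.2, hz⟩
    · rintro ⟨h, h2⟩
      exact ⟨⟨y, h⟩, h2, rfl⟩
  -- key: nonunits of O' have residue 0
  have hres0 : ∀ (y : L) (hy : y ∈ O'), y⁻¹ ∉ O' → ψ ⟨y, hy⟩ = 0 := by
    intro y hy hyinv
    show residue _ (⟨y, hy⟩ : O') = 0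
    rw [residue_eq_zero_iff, mem_maximalIdeal, mem_nonunits_iff]
    intro hu
    obtain ⟨w, hw⟩ := isUnit_iff_exists_inv.mp hu
    apply hyinv
    have hw' : y * (w : L) = 1 := congrArg Subtype.val hw
    have : (w : L) = y⁻¹ := eq_inv_of_mul_eq_one_right hw'
    exact this ▸ w.2
  let W' : ValuationSubring L :=
    { Wsub with
      mem_or_inv_mem' := by
        intro y
        by_cases hy : y ∈ O'
        · by_cases hyi : y⁻¹ ∈ O'
          · rcases eq_or_ne y 0 with rfl | hy0
            · exact Or.inl Wsub.zero_mem
            rcases B.mem_or_inv_mem (ψ ⟨y, hy⟩) with hB | hB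
            · exact Or.inl ((hWmem y).mpr ⟨hy, hB⟩)
            · refine Or.inr ((hWmem y⁻¹).mpr ⟨hyi, ?_⟩)
              have hmul : ψ ⟨y, hy⟩ * ψ ⟨y⁻¹, hyi⟩ = 1 := by
                rw [← map_mul, ← map_one ψ]
                congr 1
                exact Subtype.ext (mul_inv_cancel₀ hy0)
              rwa [inv_eq_of_mul_eq_one_right hmul] at hB
          · exact Or.inl ((hWmem y).mpr ⟨hy, by rw [hres0 y hy hyi]; exact B.zero_mem⟩)
        · have hyi : y⁻¹ ∈ O' := (O'.mem_or_inv_mem y).resolve_left hy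
          refine Or.inr ((hWmem y⁻¹).mpr ⟨hyi, ?_⟩)
          have : (y⁻¹)⁻¹ ∉ O' := by rwa [inv_inv]
          rw [hres0 y⁻¹ hyi this]; exact B.zero_mem }
  refine ⟨W', ?_, ?_⟩
  · intro y hy
    exact ((hWmem y).mp hy).1
  · ext a
    rw [ValuationSubring.mem_comap]
    show f a ∈ Wsub ↔ a ∈ Ov
    rw [hWmem]
    constructor
    · rintro ⟨ha, haB⟩
      by_contra hav
      have ha0 : a ≠ 0 := fun e => hav (e ▸ Ov.zero_mem)
      have hainv : a⁻¹ ∈ Ov := (Ov.mem_or_inv_mem a).resolve_left hav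
      have haH : a ∈ OvH := (hmemH a).mpr ha
      -- u := g(a⁻¹) is a nonunit of g.range
      set u : g.range := ⟨g ⟨a⁻¹, hainv⟩, ⟨⟨a⁻¹, hainv⟩, rfl⟩⟩ with hu
      have hnu : ¬ IsUnit u := by
        intro hun
        obtain ⟨w, hw⟩ := isUnit_iff_exists_inv.mp hun
        obtain ⟨b, hb⟩ := w.2
        have hw' : g ⟨a⁻¹, hainv⟩ * g b = 1 := by
          have h1 := congrArg Subtype.val hw
          rw [hb]
          exact h1
        rw [← map_mul, ← map_one g, ← sub_eq_zero, ← map_sub] at hw'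
        -- so (a⁻¹ * b - 1) maps to 0 in the residue field, i.e. g0 of it is a nonunit
        have hker : g0 (⟨a⁻¹, hainv⟩ * b - 1) ∈ maximalIdeal O' := by
          rw [← residue_eq_zero_iff]
          exact hw'
        have hnonunit : ¬ IsUnit (⟨a⁻¹, hainv⟩ * b - 1 : Ov) := by
          intro hcu
          have := hcu.map g0
          rw [mem_maximalIdeal, mem_nonunits_iff] at hker
          exact hker this
        have hmem : (⟨a⁻¹, hainv⟩ * b - 1 : Ov) ∈ maximalIdeal Ov := by
          rwa [mem_maximalIdeal, mem_nonunits_iff]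
        have hunit2 : IsUnit (⟨a⁻¹, hainv⟩ * b : Ov) := by
          by_contra hnu2
          have : (⟨a⁻¹, hainv⟩ * b : Ov) ∈ maximalIdeal Ov := by
            rwa [mem_maximalIdeal, mem_nonunits_iff]
          have h1 : (1 : Ov) ∈ maximalIdeal Ov := by
            have := Ideal.sub_mem _ this hmem
            simpa using this
          exact (maximalIdeal.isMaximal Ov).ne_top (Ideal.eq_top_of_isUnit_mem _ h1 isUnit_one)
        have huainv : IsUnit (⟨a⁻¹, hainv⟩ : Ov) := isUnit_of_mul_isUnit_left hunit2
        obtain ⟨d, hd⟩ := isUnit_iff_exists_inv.mp huainv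
        have hd' : a⁻¹ * (d : K) = 1 := congrArg Subtype.val hd
        have : (d : K) = a := by
          have := eq_inv_of_mul_eq_one_right hd'
          rwa [inv_inv] at this
        exact hav (this ▸ d.2)
      -- but u becomes a unit in B, contradiction with domination
      apply hnu
      apply hBloc.map_nonunit u
      refine isUnit_iff_exists_inv.mpr ⟨⟨ψ ⟨f a, ha⟩, haB⟩, ?_⟩
      apply Subtype.ext
      show g ⟨a⁻¹, hainv⟩ * ψ ⟨f a, ha⟩ = 1
      have hgg : g ⟨a⁻¹, hainv⟩ = ψ ⟨f a⁻¹, hsub _ hainv⟩ := rfl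
      rw [hgg, ← map_mul, ← map_one ψ]
      congr 1
      apply Subtype.ext
      show f a⁻¹ * f a = 1
      rw [← map_mul, inv_mul_cancel₀ ha0, map_one]
    · intro ha
      refine ⟨hsub a ha, ?_⟩
      have : ψ ⟨f a, hsub a ha⟩ = g ⟨a, ha⟩ := rfl
      rw [this]
      exact hBsub ⟨⟨a, ha⟩, rfl⟩

lemma exists_coarsening {K L : Type*} [Field K] [Field L] [Algebra K L]
    (Ov OvH : ValuationSubring K) (hle : Ov ≤ OvH)
    (W : ValuationSubring L) (hW : W.comap (algebraMap K L) = Ov) :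
    ∃ R : ValuationSubring L, W ≤ R ∧ R.comap (algebraMap K L) = OvH := by
  set f := algebraMap K L with hf
  have hmemW : ∀ a : K, a ∈ Ov ↔ f a ∈ W := fun a => by
    rw [← hW, ValuationSubring.mem_comap]
  let S : Subring L :=
    { carrier := {x : L | ∃ s : K, s ≠ 0 ∧ s ∈ Ov ∧ s⁻¹ ∈ OvH ∧ f s * x ∈ W}
      one_mem' := ⟨1, one_ne_zero, Ov.one_mem, by simpa using OvH.one_mem,
        by simpa using W.one_mem⟩
      mul_mem' := by
        rintro x y ⟨s, hs0, hs, hsi, hsx⟩ ⟨t, ht0, ht, hti, hty⟩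
        refine ⟨s * t, mul_ne_zero hs0 ht0, mul_mem hs ht, ?_, ?_⟩
        · rw [mul_inv]; exact mul_mem hsi hti
        · rw [map_mul]
          have : f s * f t * (x * y) = f s * x * (f t * y) := by ring
          rw [this]; exact mul_mem hsx hty
      add_mem' := by
        rintro x y ⟨s, hs0, hs, hsi, hsx⟩ ⟨t, ht0, ht, hti, hty⟩
        refine ⟨s * t, mul_ne_zero hs0 ht0, mul_mem hs ht, ?_, ?_⟩
        · rw [mul_inv]; exact mul_mem hsi hti
        · rw [map_mul]
          have : f s * f t * (x + y) = f t * (f s * x) + f s * (f t * y) := by ring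
          rw [this]
          exact add_mem (mul_mem ((hmemW t).mp ht) hsx) (mul_mem ((hmemW s).mp hs) hty)
      zero_mem' := ⟨1, one_ne_zero, Ov.one_mem, by simpa using OvH.one_mem,
        by simpa using W.zero_mem⟩
      neg_mem' := by
        rintro x ⟨s, hs0, hs, hsi, hsx⟩
        exact ⟨s, hs0, hs, hsi, by rw [mul_neg]; exact neg_mem hsx⟩ }
  have hWS : ∀ x : L, x ∈ W → x ∈ S := fun x hx =>
    ⟨1, one_ne_zero, Ov.one_mem, by simpa using OvH.one_mem, by simpa using hx⟩
  let R : ValuationSubring L :=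
    { S with mem_or_inv_mem' := fun x => (W.mem_or_inv_mem x).imp (hWS x) (hWS x⁻¹) }
  refine ⟨R, fun x hx => hWS x hx, ?_⟩
  ext a
  rw [ValuationSubring.mem_comap]
  show (∃ s : K, s ≠ 0 ∧ s ∈ Ov ∧ s⁻¹ ∈ OvH ∧ f s * f a ∈ W) ↔ a ∈ OvH
  constructor
  · rintro ⟨s, hs0, hs, hsi, hsa⟩
    rw [← map_mul] at hsa
    have hsa' : s * a ∈ OvH := hle ((hmemW _).mpr hsa)
    have : a = s⁻¹ * (s * a) := by field_simp
    rw [this]; exact mul_mem hsi hsa'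
  · intro ha
    by_cases hav : a ∈ Ov
    · exact ⟨1, one_ne_zero, Ov.one_mem, by simpa using OvH.one_mem,
        by simpa using (hmemW a).mp hav⟩
    · have ha0 : a ≠ 0 := fun e => hav (e ▸ Ov.zero_mem)
      have hainv : a⁻¹ ∈ Ov := (Ov.mem_or_inv_mem a).resolve_left hav
      refine ⟨a⁻¹, inv_ne_zero ha0, hainv, by rwa [inv_inv], ?_⟩
      rw [← map_mul, inv_mul_cancel₀ ha0, map_one]
      exact W.one_mem

/-- Let (K, v) be a valued field and H an isolated (convex) proper subgroup
of v(K); the coarsening v_H of v corresponds to a valuation subring O_{v_H} with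
O_v ⊆ O_{v_H} ⊊ K. If Ω/K is a normal extension and v is Ω-Henselian, then v_H
is Ω-Henselian. -/
theorem statement3 (K : Type*) [Field K] (Ov OvH : ValuationSubring K)
    (hle : Ov ≤ OvH) (hproper : OvH ≠ ⊤)
    (Ω : Type*) [Field Ω] [Algebra K Ω] [Normal K Ω]
    (h : UniquelyExtends Ω Ov) :
    UniquelyExtends Ω OvH := by
  intro L
  obtain ⟨W, hW, hWuniq⟩ := h L
  -- every element of L is algebraic over K
  have halgL : ∀ x : L, IsAlgebraic K x := by
    intro x
    obtain ⟨p, hp0, hpx⟩ : IsAlgebraic K ((IsScalarTower.toAlgHom K L Ω) x) :=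
      Algebra.IsAlgebraic.isAlgebraic _
    refine ⟨p, hp0, ?_⟩
    apply (IsScalarTower.toAlgHom K L Ω).toRingHom.injective
    rw [map_zero]
    rw [Polynomial.aeval_algHom_apply] at hpx
    exact hpx
  -- every extension of OvH contains W
  have hWle : ∀ O' : ValuationSubring L, O'.comap (algebraMap K L) = OvH → W ≤ O' := by
    intro O' hO'
    obtain ⟨W', hW'le, hW'c⟩ := exists_refinement Ov OvH hle O' hO'
    rw [hWuniq W' hW'c] at hW'le
    exact hW'le
  -- the key one-way inclusion
  have key : ∀ O1 O2 : ValuationSubring L, O1.comap (algebraMap K L) = OvH →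
      O2.comap (algebraMap K L) = OvH → O1 ≤ O2 := by
    intro O1 O2 h1 h2 x hx1
    by_contra hx2
    have hx0 : x ≠ 0 := fun e => hx2 (e ▸ O2.zero_mem)
    obtain ⟨m, c, ε, hm, hε, hεi, hxm⟩ := exists_pow_eq_mul_unit W (halgL x) hx0
    have hxm2 : x ^ m ∉ O2 := pow_not_mem_aux O2 hx2 hm
    have hfc : algebraMap K L c ∈ O1 := by
      have hε0 : ε ≠ 0 := by
        rintro rfl
        rw [mul_zero] at hxm
        exact pow_ne_zero m hx0 hxm
      have : algebraMap K L c = x ^ m * ε⁻¹ := by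
        rw [hxm, mul_assoc, mul_inv_cancel₀ hε0, mul_one]
      rw [this]
      exact mul_mem (pow_mem hx1 m) (hWle O1 h1 hεi)
    have hcH : c ∈ OvH := by
      rw [← h1, ValuationSubring.mem_comap]; exact hfc
    have hfc2 : algebraMap K L c ∈ O2 := by
      rw [← ValuationSubring.mem_comap (f := algebraMap K L), h2]
      exact hcH
    exact hxm2 (hxm ▸ mul_mem hfc2 (hWle O2 h2 hε))
  -- existence
  obtain ⟨R, hWR, hRc⟩ := exists_coarsening Ov OvH hle W hW
  exact ⟨R, hRc, fun O' hO' => le_antisymm (key O' R hO' hRc) (key R O' hRc hO')⟩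
end
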